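/- Let G be a connected graph and let P = v_1 ... v_n be a non-terminal path (all v_i have degree 2 in G, n ≥ 2), and let G' be the graph obtained by deleting v_2, ..., v_{n−1} and adding the edge v_1 v_n. Then any set A ⊆ V(G) disjoint from {v_1, ..., v_n} is a power dominating set of G if and only if it is a power dominating set of G'. -/

import Mathlib

variable {V : Type*}

/-- Closed neighborhood of a set `A`: vertices in `A` or adjacent to a vertex of `A`
(the result of the domination step). -/
def closedNbhd (G : SimpleGraph V) (A : Set V) : Set V :=
  {w | ∃ v ∈ A, w = v ∨ G.Adj v w}

/-- One zero forcing step: an observed vertex `u` with exactly one unobserved neighbor `w`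
forces `w`, enlarging the observed set `S` to `insert w S`. -/
def ForceStep (G : SimpleGraph V) (S T : Set V) : Prop :=
  ∃ u w, u ∈ S ∧ w ∉ S ∧ G.Adj u w ∧ (∀ x, G.Adj u x → x ∉ S → x = w) ∧ T = insert w S

/-- `Observes G A O` : starting from the closed neighborhood of `A`, some sequence of
zero forcing steps yields observed set `O`. -/
def Observes (G : SimpleGraph V) (A O : Set V) : Prop :=
  Relation.ReflTransGen (ForceStep G) (closedNbhd G A) O

/-- No further zero forcing step applies from `O`. -/
def Stalled (G : SimpleGraph V) (O : Set V) : Prop := ∀ T, ¬ ForceStep G O T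

/-- `A` is a power dominating set: the process observes every vertex. -/
def IsPDS (G : SimpleGraph V) (A : Set V) : Prop := Observes G A Set.univ

/-- The power domination number: minimum size of a power dominating set. -/
noncomputable def pdn (G : SimpleGraph V) [Fintype V] : ℕ :=
  sInf {n | ∃ A : Finset V, IsPDS G (↑A : Set V) ∧ A.card = n}

/-- A fort: a nonempty set such that no outside vertex has exactly one neighbor in it. -/
def IsFort (G : SimpleGraph V) (F : Set V) : Prop :=
  F.Nonempty ∧ ∀ u ∉ F, ¬ ∃! w, w ∈ F ∧ G.Adj u w

/-- A terminal fort with cut vertex `v`: a fort whose only external neighbor is `v`. -/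
def IsTerminalFort (G : SimpleGraph V) (v : V) (F : Set V) : Prop :=
  IsFort G F ∧ v ∉ F ∧ ∀ u ∉ F, (∃ w ∈ F, G.Adj u w) → u = v

/-- `v` is f-preferred with terminal fort `F`: the process with input `{v}` observes all of `F`. -/
def FPreferred (G : SimpleGraph V) (v : V) (F : Set V) : Prop :=
  IsTerminalFort G v F ∧ ∃ O, Observes G {v} O ∧ F ⊆ O

/-- `v` is p-preferred: f-preferred with a terminal fort containing another f-preferred vertex. -/
def PPreferred (G : SimpleGraph V) (v : V) : Prop :=
  ∃ F, FPreferred G v F ∧ ∃ w ∈ F, w ≠ v ∧ ∃ F', FPreferred G w F'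

/-! Power domination does not depend on the order of the forces, so `A` is a power dominating
set exactly when every stalled set (one from which no vertex can force) containing the closed
neighbourhood of `A` is everything. Stalled sets of `G` and of the contracted graph `G'` then
correspond. A stalled set of `G'` extends to `G` by declaring the deleted vertices observed exactly
when both ends of the new edge are. Conversely, a stalled set of `G` containing the whole path
restricts to `G'`. Otherwise, since a stalled set containing two consecutive path vertices, or an
end of the path together with a neighbour of it, contains the whole path, deleting both ends of
the path gives a stalled set of `G'`. -/

theorem subset_of_reflTransGen_forceStep {G : SimpleGraph V} {S T : Set V}
    (h : Relation.ReflTransGen (ForceStep G) S T) : S ⊆ T := by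
  induction h with
  | refl => exact subset_rfl
  | tail _ hstep ih =>
    obtain ⟨u, w, -, -, -, -, rfl⟩ := hstep
    exact ih.trans (Set.subset_insert w _)

theorem stalled_iff {G : SimpleGraph V} {S : Set V} :
    Stalled G S ↔ ∀ u ∈ S, ∀ w, G.Adj u w → w ∉ S → ∃ x, G.Adj u x ∧ x ∉ S ∧ x ≠ w := by
  constructor
  · intro h u hu w huw hw
    by_contra! hx
    exact h _ ⟨u, w, hu, hw, huw, hx, rfl⟩
  · rintro h T ⟨u, w, hu, hw, huw, huniq, -⟩
    obtain ⟨x, hux, hx, hxw⟩ := h u hu w huw hw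
    exact hxw (huniq x hux hx)

theorem exists_stalled [Finite V] (G : SimpleGraph V) (S : Set V) :
    ∃ O, Relation.ReflTransGen (ForceStep G) S O ∧ Stalled G O := by
  obtain ⟨O, hO, hmax⟩ := Set.exists_max_image {O | Relation.ReflTransGen (ForceStep G) S O}
    Set.ncard (Set.toFinite _) ⟨S, .refl⟩
  refine ⟨O, hO, ?_⟩
  rintro T ⟨u, w, hu, hw, huw, huniq, rfl⟩
  have := hmax _ (hO.tail ⟨u, w, hu, hw, huw, huniq, rfl⟩)
  rw [Set.ncard_insert_of_notMem hw] at this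
  omega

theorem Stalled.subset_of_reflTransGen {G : SimpleGraph V} {S T O : Set V} (hS : Stalled G S)
    (hT : T ⊆ S) (h : Relation.ReflTransGen (ForceStep G) T O) : O ⊆ S := by
  induction h with
  | refl => exact hT
  | tail _ hstep ih =>
    obtain ⟨u, w, hu, hw, huw, huniq, rfl⟩ := hstep
    refine Set.insert_subset ?_ ih
    by_contra hwS
    obtain ⟨x, hux, hxS, hxw⟩ := stalled_iff.1 hS u (ih hu) w huw hwS
    exact hxw (huniq x hux fun hxO => hxS (ih hxO))

theorem isPDS_iff_forall_stalled [Finite V] {G : SimpleGraph V} {A : Set V} :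
    IsPDS G A ↔ ∀ S, closedNbhd G A ⊆ S → Stalled G S → S = Set.univ := by
  constructor
  · intro h S hAS hS
    exact Set.eq_univ_of_univ_subset (hS.subset_of_reflTransGen hAS h)
  · intro h
    obtain ⟨O, hO, hOs⟩ := exists_stalled G (closedNbhd G A)
    rwa [IsPDS, Observes, ← h O (subset_of_reflTransGen_forceStep hO) hOs]

theorem SimpleGraph.eq_or_eq_of_degree_eq_two {G : SimpleGraph V} {u a b y : V}
    [Fintype (G.neighborSet u)] (hu : G.degree u = 2) (ha : G.Adj u a) (hb : G.Adj u b)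
    (hab : a ≠ b) (hy : G.Adj u y) : y = a ∨ y = b := by
  classical
  have hnbr : G.neighborFinset u = {a, b} :=
    (Finset.eq_of_subset_of_card_le (by simp [Finset.insert_subset_iff, ha, hb])
      (by rw [G.card_neighborFinset_eq_degree, hu, Finset.card_pair hab])).symm
  simpa [hnbr] using (G.mem_neighborFinset u y).2 hy

theorem Stalled.mem_of_degree_eq_two {G : SimpleGraph V} {S : Set V} {u p y : V}
    [Fintype (G.neighborSet u)] (hS : Stalled G S) (hu : u ∈ S) (hdeg : G.degree u = 2)
    (hp : G.Adj u p) (hy : G.Adj u y) (hyS : y ∈ S) : p ∈ S := by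
  by_contra hpS
  obtain ⟨x, hux, hxS, hxp⟩ := stalled_iff.1 hS u hu p hp hpS
  rcases G.eq_or_eq_of_degree_eq_two hdeg hy hp (fun h => hpS (h ▸ hyS)) hux with rfl | rfl
  · exact hxS hyS
  · exact hxp rfl


theorem SimpleGraph.fromEdgeSet_insert_induce_adj (G : SimpleGraph V) {s : Set V} {e₁ e₂ : s}
    (he : (e₁ : V) ≠ e₂) (a b : s) :
    (SimpleGraph.fromEdgeSet (insert s(e₁, e₂) (G.induce s).edgeSet)).Adj a b ↔
      G.Adj a b ∨ s((a : V), b) = s((e₁ : V), e₂) := by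
  simp only [SimpleGraph.fromEdgeSet_adj, Set.mem_insert_iff, SimpleGraph.mem_edgeSet,
    SimpleGraph.induce_adj, Sym2.eq_iff, ← Subtype.ext_iff]
  constructor
  · rintro ⟨h | h, -⟩
    · exact .inr h
    · exact .inl h
  · rintro (h | h)
    · exact ⟨.inr h, G.ne_of_adj h ∘ congrArg Subtype.val⟩
    · refine ⟨.inl h, ?_⟩
      rintro rfl
      rcases h with ⟨rfl, rfl⟩ | ⟨rfl, rfl⟩ <;> exact he rfl

theorem exists_lt_eq_of_not_mem {n : ℕ} {v : ℕ → V} {s : Set V}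
    (hs : s = {w | ∀ i, 1 ≤ i → i < n - 1 → w ≠ v i}) {w : V}
    (hw : w ∉ s) : ∃ k < n, w = v k := by
  subst hs
  simp only [Set.mem_ofPred_eq, not_forall, not_not] at hw
  obtain ⟨k, -, hk, rfl⟩ := hw
  exact ⟨k, by omega, rfl⟩

/-- The deleted vertices count as observed exactly when both ends `e₁`, `e₂` of the new edge
are. -/
def liftObserved (s : Set V) (e₁ e₂ : V) (S' : Set s) : Set V :=
  {w | (∃ h : w ∈ s, ⟨w, h⟩ ∈ S') ∨ (w ∉ s ∧ ∀ a : s, (a : V) = e₁ ∨ (a : V) = e₂ → a ∈ S')}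

theorem val_not_mem_liftObserved {s : Set V} {e₁ e₂ : V} {S' : Set s} {x : s} (hx : x ∉ S') :
    (x : V) ∉ liftObserved s e₁ e₂ S' := by
  rintro (⟨_, hx'⟩ | ⟨hxs, -⟩)
  · exact hx hx'
  · exact hxs x.2

theorem eq_univ_of_liftObserved_eq_univ {s : Set V} {e₁ e₂ : V} {S' : Set s}
    (h : liftObserved s e₁ e₂ S' = Set.univ) : S' = Set.univ := by
  refine Set.eq_univ_of_forall fun x => ?_
  have hx : (x : V) ∈ liftObserved s e₁ e₂ S' := h ▸ Set.mem_univ _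
  rcases hx with ⟨_, hx⟩ | ⟨hx, -⟩
  · exact hx
  · exact absurd x.2 hx

structure IsNonterminalPath [Fintype V] (G : SimpleGraph V) [DecidableRel G.Adj] (n : ℕ)
    (v : ℕ → V) : Prop where
  two_le : 2 ≤ n
  injOn : ∀ i j, i < n → j < n → v i = v j → i = j
  adj : ∀ i, i + 1 < n → G.Adj (v i) (v (i + 1))
  degree_eq_two : ∀ i, i < n → G.degree (v i) = 2

namespace IsNonterminalPath

variable [Fintype V] {G : SimpleGraph V} [DecidableRel G.Adj] {n : ℕ} {v : ℕ → V} {s : Set V}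
  {G' : SimpleGraph s} {A S : Set V}

theorem adj_of_eq (hP : IsNonterminalPath G n v) {i k : ℕ} (hik : k = i + 1) (hk : k < n) :
    G.Adj (v i) (v k) :=
  hik ▸ hP.adj i (hik ▸ hk)

theorem endpoints_ne (hP : IsNonterminalPath G n v) : v 0 ≠ v (n - 1) := fun h => by
  have := hP.two_le
  have := hP.injOn 0 (n - 1) (by omega) (by omega) h
  omega

theorem eq_or_eq_of_adj (hP : IsNonterminalPath G n v) {j : ℕ} (hj₁ : 1 ≤ j) (hj₂ : j < n - 1)
    {y : V} (hy : G.Adj (v j) y) : y = v (j - 1) ∨ y = v (j + 1) :=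
  G.eq_or_eq_of_degree_eq_two (hP.degree_eq_two j (by omega))
    (hP.adj_of_eq (by omega) (by omega)).symm (hP.adj j (by omega))
    (fun h => by have := hP.injOn _ _ (by omega) (by omega) h; omega) hy

theorem mem_add_two (hP : IsNonterminalPath G n v) (hS : Stalled G S) {k : ℕ} (hk : k + 2 < n)
    (h₀ : v k ∈ S) (h₁ : v (k + 1) ∈ S) : v (k + 2) ∈ S :=
  hS.mem_of_degree_eq_two h₁ (hP.degree_eq_two _ (by omega)) (hP.adj _ hk)
    (hP.adj k (by omega)).symm h₀

theorem mem_of_add_two (hP : IsNonterminalPath G n v) (hS : Stalled G S) {k : ℕ}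
    (hk : k + 2 < n) (h₁ : v (k + 1) ∈ S) (h₂ : v (k + 2) ∈ S) : v k ∈ S :=
  hS.mem_of_degree_eq_two h₁ (hP.degree_eq_two _ (by omega)) (hP.adj k (by omega)).symm
    (hP.adj _ hk) h₂

theorem forall_mem_of_consecutive (hP : IsNonterminalPath G n v) (hS : Stalled G S) {j : ℕ}
    (hj : j + 1 < n) (h₀ : v j ∈ S) (h₁ : v (j + 1) ∈ S) : ∀ k < n, v k ∈ S := by
  have up : ∀ d, j + d + 1 < n → v (j + d) ∈ S ∧ v (j + d + 1) ∈ S := by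
    intro d
    induction d with
    | zero => exact fun _ => ⟨h₀, h₁⟩
    | succ d ih =>
      intro hd
      obtain ⟨ha, hb⟩ := ih (by omega)
      exact ⟨hb, hP.mem_add_two hS (by omega) ha hb⟩
  have down : ∀ d ≤ j, v (j - d) ∈ S ∧ v (j - d + 1) ∈ S := by
    intro d
    induction d with
    | zero => exact fun _ => ⟨h₀, h₁⟩
    | succ d ih =>
      intro hd
      obtain ⟨ha, hb⟩ := ih (by omega)
      rw [show j - d = j - (d + 1) + 1 by omega] at ha hb
      exact ⟨hP.mem_of_add_two hS (by omega) ha hb, ha⟩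
  intro k hk
  rcases le_or_gt k j with hkj | hjk
  · simpa [Nat.sub_sub_self hkj] using (down (j - k) (by omega)).1
  · simpa [show j + (k - j - 1) + 1 = k by omega] using (up (k - j - 1) (by omega)).2

theorem forall_mem_of_endpoint (hP : IsNonterminalPath G n v) (hS : Stalled G S) {e y : V}
    (he : e = v 0 ∨ e = v (n - 1)) (heS : e ∈ S) (hy : G.Adj e y) (hyS : y ∈ S) :
    ∀ k < n, v k ∈ S := by
  have := hP.two_le
  rcases he with rfl | rfl
  · exact hP.forall_mem_of_consecutive hS (by omega) heS
      (hS.mem_of_degree_eq_two heS (hP.degree_eq_two 0 (by omega)) (hP.adj 0 (by omega)) hy hyS)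
  · refine hP.forall_mem_of_consecutive hS (j := n - 2) (by omega)
      (hS.mem_of_degree_eq_two heS (hP.degree_eq_two _ (by omega))
        (hP.adj_of_eq (by omega) (by omega)).symm hy hyS) ?_
    rwa [show n - 2 + 1 = n - 1 by omega]

theorem endpoint_mem (hP : IsNonterminalPath G n v)
    (hs : s = {w | ∀ i, 1 ≤ i → i < n - 1 → w ≠ v i}) {e : V} (he : e = v 0 ∨ e = v (n - 1)) :
    e ∈ s := by
  subst hs
  have := hP.two_le
  rcases he with rfl | rfl <;> intro i hi₁ hi₂ h <;>
    have := hP.injOn _ _ (by omega) (by omega) h <;> omega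

theorem endpoint_of_adj_not_mem (hP : IsNonterminalPath G n v)
    (hs : s = {w | ∀ i, 1 ≤ i → i < n - 1 → w ≠ v i}) {u w : V} (hu : u ∈ s) (hw : w ∉ s)
    (huw : G.Adj u w) : u = v 0 ∨ u = v (n - 1) := by
  subst hs
  simp only [Set.mem_ofPred_eq, not_forall, not_not] at hu hw
  obtain ⟨j, hj₁, hj₂, rfl⟩ := hw
  rcases hP.eq_or_eq_of_adj hj₁ hj₂ huw.symm with rfl | rfl
  · by_cases hj : j = 1
    · exact .inl (by rw [hj])
    · exact absurd rfl (hu (j - 1) (by omega) (by omega))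
  · by_cases hj : j + 1 = n - 1
    · exact .inr (by rw [hj])
    · exact absurd rfl (hu (j + 1) (by omega) (by omega))

theorem exists_adj_not_mem (hP : IsNonterminalPath G n v)
    (hs : s = {w | ∀ i, 1 ≤ i → i < n - 1 → w ≠ v i}) {u : V} (hu : u = v 0 ∨ u = v (n - 1))
    (h : ¬ G.Adj (v 0) (v (n - 1))) : ∃ p ∉ s, G.Adj u p := by
  have hn : 3 ≤ n := by
    by_contra hn
    have := hP.two_le
    exact h (hP.adj_of_eq (by omega) (by omega))
  subst hs
  rcases hu with rfl | rfl
  · exact ⟨v 1, fun h' => h' 1 le_rfl (by omega) rfl, hP.adj 0 (by omega)⟩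
  · exact ⟨v (n - 2), fun h' => h' (n - 2) (by omega) (by omega) rfl,
      (hP.adj_of_eq (by omega) (by omega)).symm⟩

theorem closedNbhd_subset_liftObserved (hP : IsNonterminalPath G n v)
    (hs : s = {w | ∀ i, 1 ≤ i → i < n - 1 → w ≠ v i})
    (hG' : ∀ a b : s, G'.Adj a b ↔ G.Adj a b ∨ s((a : V), b) = s(v 0, v (n - 1)))
    {A : Set V} (hA : ∀ i, i < n → v i ∉ A) {S' : Set s}
    (hAS' : closedNbhd G' (Subtype.val ⁻¹' A) ⊆ S') :
    closedNbhd G A ⊆ liftObserved s (v 0) (v (n - 1)) S' := by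
  have hAs : ∀ a ∈ A, a ∈ s := fun a ha => by
    by_contra has
    obtain ⟨k, hk, rfl⟩ := exists_lt_eq_of_not_mem hs has
    exact hA k hk ha
  rintro w ⟨a, ha, rfl | haw⟩
  · exact .inl ⟨hAs w ha, hAS' ⟨_, ha, .inl rfl⟩⟩
  · have hws : w ∈ s := by
      by_contra hws
      rcases hP.endpoint_of_adj_not_mem hs (hAs a ha) hws haw with rfl | rfl
      · exact hA 0 (by have := hP.two_le; omega) ha
      · exact hA (n - 1) (by have := hP.two_le; omega) ha
    exact .inl ⟨hws, hAS' ⟨⟨a, hAs a ha⟩, ha, .inr ((hG' _ _).2 (.inl haw))⟩⟩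

theorem exists_adj_not_mem_liftObserved (hP : IsNonterminalPath G n v)
    (hs : s = {w | ∀ i, 1 ≤ i → i < n - 1 → w ≠ v i}) {S' : Set s} {u : V} {x : s}
    (hux : s(u, (x : V)) = s(v 0, v (n - 1))) (hGux : ¬ G.Adj u x) (hxS' : x ∉ S') :
    ∃ p ∉ s, G.Adj u p ∧ p ∉ liftObserved s (v 0) (v (n - 1)) S' := by
  have hnadj : ¬ G.Adj (v 0) (v (n - 1)) := by
    rcases Sym2.eq_iff.1 hux with ⟨rfl, hx⟩ | ⟨rfl, hx⟩
    · exact hx ▸ hGux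
    · exact fun h => hGux (hx ▸ h.symm)
  obtain ⟨p, hps, hup⟩ :=
    hP.exists_adj_not_mem hs (Sym2.mem_iff.1 (hux ▸ Sym2.mem_mk_left _ _)) hnadj
  refine ⟨p, hps, hup, ?_⟩
  rintro (⟨hp, -⟩ | ⟨-, hall⟩)
  · exact hps hp
  · exact hxS' (hall x (Sym2.mem_iff.1 (hux ▸ Sym2.mem_mk_right _ _)))

theorem stalled_liftObserved (hP : IsNonterminalPath G n v)
    (hs : s = {w | ∀ i, 1 ≤ i → i < n - 1 → w ≠ v i})
    (hG' : ∀ a b : s, G'.Adj a b ↔ G.Adj a b ∨ s((a : V), b) = s(v 0, v (n - 1)))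
    {S' : Set s} (hS' : Stalled G' S') : Stalled G (liftObserved s (v 0) (v (n - 1)) S') := by
  rw [stalled_iff]
  rintro u hu w huw hw
  simp only [liftObserved, Set.mem_ofPred_eq, not_or, not_exists, not_and] at hu hw
  obtain ⟨hwS', hw'⟩ := hw
  rcases hu with ⟨hus, huS'⟩ | ⟨hus, hends⟩
  swap
  · exfalso
    by_cases hws : w ∈ s
    · exact hwS' hws (hends ⟨w, hws⟩ (hP.endpoint_of_adj_not_mem hs hws hus huw.symm))
    · exact hw' hws hends
  by_cases hws : w ∈ s
  · obtain ⟨x, hux, hxS', hxw⟩ := stalled_iff.1 hS' ⟨u, hus⟩ huS' ⟨w, hws⟩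
      ((hG' _ _).2 (.inl huw)) (hwS' hws)
    by_cases hGux : G.Adj u x
    · exact ⟨x, hGux, val_not_mem_liftObserved hxS', fun h => hxw (Subtype.ext h)⟩
    obtain ⟨p, hps, hup, hpS⟩ := hP.exists_adj_not_mem_liftObserved hs
      (((hG' _ _).1 hux).resolve_left hGux) hGux hxS'
    exact ⟨p, hup, hpS, fun h => hps (h ▸ hws)⟩
  · have hends' := hw' hws
    push Not at hends'
    obtain ⟨e, he, heS'⟩ := hends'
    have hne : u ≠ e := by
      rintro rfl
      exact heS' huS'
    have hue : s(u, (e : V)) = s(v 0, v (n - 1)) := ((Sym2.mem_and_mem_iff hne).1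
      ⟨Sym2.mem_iff.2 (hP.endpoint_of_adj_not_mem hs hus hws huw), Sym2.mem_iff.2 he⟩).symm
    obtain ⟨x, hux, hxS', hxe⟩ := stalled_iff.1 hS' ⟨u, hus⟩ huS' e ((hG' _ _).2 (.inr hue)) heS'
    have hGux : G.Adj u x := ((hG' _ _).1 hux).resolve_right fun h =>
      hxe (Subtype.ext (Sym2.congr_right.1 (h.trans hue.symm)))
    exact ⟨x, hGux, val_not_mem_liftObserved hxS', fun h => hws (h ▸ x.2)⟩

theorem closedNbhd_subset_preimage (hP : IsNonterminalPath G n v)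
    (hG' : ∀ a b : s, G'.Adj a b ↔ G.Adj a b ∨ s((a : V), b) = s(v 0, v (n - 1)))
    (hAS : closedNbhd G A ⊆ S) (hpath : ∀ k < n, v k ∈ S) :
    closedNbhd G' (Subtype.val ⁻¹' A) ⊆ Subtype.val ⁻¹' S := by
  rintro w ⟨a, ha, rfl | haw⟩
  · exact hAS ⟨_, ha, .inl rfl⟩
  · rcases (hG' a w).1 haw with haw | haw
    · exact hAS ⟨a, ha, .inr haw⟩
    · have := hP.two_le
      rcases Sym2.mem_iff.1 (haw ▸ Sym2.mem_mk_right _ _) with h | h <;>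
        rw [Set.mem_preimage, h] <;> exact hpath _ (by omega)

theorem stalled_preimage (hP : IsNonterminalPath G n v)
    (hs : s = {w | ∀ i, 1 ≤ i → i < n - 1 → w ≠ v i})
    (hG' : ∀ a b : s, G'.Adj a b ↔ G.Adj a b ∨ s((a : V), b) = s(v 0, v (n - 1)))
    (hS : Stalled G S) (hpath : ∀ k < n, v k ∈ S) : Stalled G' (Subtype.val ⁻¹' S) := by
  rw [stalled_iff]
  intro u hu w huw hw
  rcases (hG' u w).1 huw with huw | huw
  · obtain ⟨x, hux, hxS, hxw⟩ := stalled_iff.1 hS u hu w huw hw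
    have hxs : x ∈ s := by
      by_contra hxs
      obtain ⟨k, hk, rfl⟩ := exists_lt_eq_of_not_mem hs hxs
      exact hxS (hpath k hk)
    exact ⟨⟨x, hxs⟩, (hG' _ _).2 (.inl hux), hxS, fun h => hxw (congrArg Subtype.val h)⟩
  · have := hP.two_le
    refine absurd ?_ hw
    rcases Sym2.mem_iff.1 (huw ▸ Sym2.mem_mk_right _ _) with h | h <;>
      rw [Set.mem_preimage, h] <;> exact hpath _ (by omega)

theorem closedNbhd_subset_preimage_diff (hP : IsNonterminalPath G n v)
    (hG' : ∀ a b : s, G'.Adj a b ↔ G.Adj a b ∨ s((a : V), b) = s(v 0, v (n - 1)))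
    (hA : ∀ i, i < n → v i ∉ A) (hS : Stalled G S) (hAS : closedNbhd G A ⊆ S)
    (hpath : ¬ ∀ k < n, v k ∈ S) :
    closedNbhd G' (Subtype.val ⁻¹' A) ⊆
      Subtype.val ⁻¹' S \ {a | (a : V) = v 0 ∨ (a : V) = v (n - 1)} := by
  have hAe : ∀ a ∈ A, ¬ (a = v 0 ∨ a = v (n - 1)) := by
    have := hP.two_le
    rintro a ha (rfl | rfl)
    · exact hA 0 (by omega) ha
    · exact hA (n - 1) (by omega) ha
  rintro w ⟨a, ha, rfl | haw⟩
  · exact ⟨hAS ⟨_, ha, .inl rfl⟩, hAe _ ha⟩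
  · have hG : G.Adj a w := ((hG' a w).1 haw).resolve_right fun h =>
      hAe a ha (Sym2.mem_iff.1 (h ▸ Sym2.mem_mk_left _ _))
    have hwS := hAS ⟨a, ha, .inr hG⟩
    exact ⟨hwS, fun hwe =>
      hpath (hP.forall_mem_of_endpoint hS hwe hwS hG.symm (hAS ⟨a, ha, .inl rfl⟩))⟩

theorem stalled_preimage_diff (hP : IsNonterminalPath G n v)
    (hs : s = {w | ∀ i, 1 ≤ i → i < n - 1 → w ≠ v i})
    (hG' : ∀ a b : s, G'.Adj a b ↔ G.Adj a b ∨ s((a : V), b) = s(v 0, v (n - 1)))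
    (hS : Stalled G S) (hpath : ¬ ∀ k < n, v k ∈ S) :
    Stalled G' (Subtype.val ⁻¹' S \ {a | (a : V) = v 0 ∨ (a : V) = v (n - 1)}) := by
  rw [stalled_iff]
  rintro u ⟨hu, hue⟩ w huw hw
  have hG : G.Adj u w := ((hG' u w).1 huw).resolve_right fun h =>
    hue (Sym2.mem_iff.1 (h ▸ Sym2.mem_mk_left _ _))
  have hwS : (w : V) ∉ S := fun hwS =>
    hw ⟨hwS, fun hwe => hpath (hP.forall_mem_of_endpoint hS hwe hwS hG.symm hu)⟩
  obtain ⟨x, hux, hxS, hxw⟩ := stalled_iff.1 hS u hu w hG hwS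
  have hxs : x ∈ s := by
    by_contra hxs
    exact hue (hP.endpoint_of_adj_not_mem hs u.2 hxs hux)
  exact ⟨⟨x, hxs⟩, (hG' _ _).2 (.inl hux), fun h => hxS h.1,
    fun h => hxw (congrArg Subtype.val h)⟩

theorem exists_stalled_restrict (hP : IsNonterminalPath G n v)
    (hs : s = {w | ∀ i, 1 ≤ i → i < n - 1 → w ≠ v i})
    (hG' : ∀ a b : s, G'.Adj a b ↔ G.Adj a b ∨ s((a : V), b) = s(v 0, v (n - 1)))
    (hA : ∀ i, i < n → v i ∉ A) (hS : Stalled G S) (hAS : closedNbhd G A ⊆ S) :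
    ∃ S' : Set s, closedNbhd G' (Subtype.val ⁻¹' A) ⊆ S' ∧ Stalled G' S' ∧
      (S' = Set.univ → S = Set.univ) := by
  by_cases hpath : ∀ k < n, v k ∈ S
  · refine ⟨_, hP.closedNbhd_subset_preimage hG' hAS hpath, hP.stalled_preimage hs hG' hS hpath,
      fun h => Set.eq_univ_of_forall fun w => ?_⟩
    by_cases hws : w ∈ s
    · have hw : (⟨w, hws⟩ : ↥s) ∈ Set.univ := Set.mem_univ _
      exact (h ▸ hw : (⟨w, hws⟩ : ↥s) ∈ Subtype.val ⁻¹' S)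
    · obtain ⟨k, hk, rfl⟩ := exists_lt_eq_of_not_mem hs hws
      exact hpath k hk
  · refine ⟨_, hP.closedNbhd_subset_preimage_diff hG' hA hS hAS hpath,
      hP.stalled_preimage_diff hs hG' hS hpath, fun h => ?_⟩
    have hv₀ : (⟨v 0, hP.endpoint_mem hs (.inl rfl)⟩ : ↥s) ∈ Set.univ := Set.mem_univ _
    exact absurd (.inl rfl) (h ▸ hv₀).2

end IsNonterminalPath

theorem stmt_4_general {V : Type*} [Fintype V] (G : SimpleGraph V) [DecidableRel G.Adj]
    (n : ℕ) (hn : 2 ≤ n) (v : ℕ → V)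
    (hinj : ∀ i j, i < n → j < n → v i = v j → i = j)
    (hadj : ∀ i, i + 1 < n → G.Adj (v i) (v (i + 1)))
    (hdeg : ∀ i, i < n → G.degree (v i) = 2)
    (s : Set V) (hs : s = {w | ∀ i, 1 ≤ i → i < n - 1 → w ≠ v i})
    (h0 : v 0 ∈ s) (hlast : v (n - 1) ∈ s)
    (A : Set V) (hA : ∀ i, i < n → v i ∉ A) :
    IsPDS G A ↔
      IsPDS
        (SimpleGraph.fromEdgeSet
          (insert s(⟨v 0, h0⟩, ⟨v (n - 1), hlast⟩) (G.induce s).edgeSet))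
        (Subtype.val ⁻¹' A) := by
  have hP : IsNonterminalPath G n v := ⟨hn, hinj, hadj, hdeg⟩
  have hG' := G.fromEdgeSet_insert_induce_adj (e₁ := ⟨v 0, h0⟩) (e₂ := ⟨v (n - 1), hlast⟩)
    hP.endpoints_ne
  rw [isPDS_iff_forall_stalled, isPDS_iff_forall_stalled]
  constructor
  · intro h S' hAS' hS'
    exact eq_univ_of_liftObserved_eq_univ
      (h _ (hP.closedNbhd_subset_liftObserved hs hG' hA hAS') (hP.stalled_liftObserved hs hG' hS'))
  · intro h S hAS hS
    obtain ⟨S', hAS', hS', hS'univ⟩ := hP.exists_stalled_restrict hs hG' hA hS hAS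
    exact hS'univ (h S' hAS' hS')

/-- Contracting a non-terminal path $v_1 ... v_n$ (all vertices of degree 2) to the edge
$v_1 v_n$ preserves power dominating sets disjoint from the path (0-indexed below). -/
theorem stmt_4 {V : Type*} [Fintype V] (G : SimpleGraph V) [DecidableRel G.Adj]
    (hc : G.Connected) (n : ℕ) (hn : 2 ≤ n) (v : ℕ → V)
    (hinj : ∀ i j, i < n → j < n → v i = v j → i = j)
    (hadj : ∀ i, i + 1 < n → G.Adj (v i) (v (i + 1)))
    (hdeg : ∀ i, i < n → G.degree (v i) = 2)
    (s : Set V) (hs : s = {w | ∀ i, 1 ≤ i → i < n - 1 → w ≠ v i})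
    (h0 : v 0 ∈ s) (hlast : v (n - 1) ∈ s)
    (A : Set V) (hA : ∀ i, i < n → v i ∉ A) :
    IsPDS G A ↔
      IsPDS
        (SimpleGraph.fromEdgeSet
          (insert s(⟨v 0, h0⟩, ⟨v (n - 1), hlast⟩) (G.induce s).edgeSet))
        (Subtype.val ⁻¹' A) :=
  stmt_4_general G n hn v hinj hadj hdeg s hs h0 hlast A hA
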